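/- Fix a β-sequence [·]_β. For u ∈ 𝒫₀,₁, let (P_n^{(u)})_{n≥0} be the polynomial sequence determined by Σ_{n≥0} (1/[n]_β!) P_n^{(u)}(x) z^n = Σ_{k≥0} (1/[k]_β!) x^k u(z)^k in ℂ[x][[z]], and let W_u be the umbral operator, the ℂ-linear operator on ℂ[x] with W_u(x^n) = P_n^{(u)}. Then for all u_1, u_2 ∈ 𝒫₀,₁, the composition of umbral operators satisfies W_{u_2} ∘ W_{u_1} = W_{u_2 ∘ u_1}, where u_2 ∘ u_1 denotes the substitution of u_1 into u_2 (which again lies in 𝒫₀,₁). In particular, the umbral operators form a group isomorphic (up to order of composition) to the group (𝒫₀,₁, ∘) of formal power series under composition. -/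

import Mathlib

/-!
Write `P_n^{(u)} = [n]! Σ_k ([k]!)⁻¹ coeff_n(u^k) x^k`. Applying `W_{u₂}` to `P_n^{(u₁)}` replaces
each `x^k` by `P_k^{(u₂)}`; the factors `[k]!` cancel and the coefficient of `x^j` becomes
`[n]! ([j]!)⁻¹ Σ_k coeff_k(u₂^j) coeff_n(u₁^k) = [n]! ([j]!)⁻¹ coeff_n((u₂^j) ∘ u₁)`.
Substitution of `u₁` is a ring homomorphism, so `(u₂^j) ∘ u₁ = (u₂ ∘ u₁)^j`, and this is the
coefficient of `x^j` in `P_n^{(u₂ ∘ u₁)}`.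
-/

/-- The β-factorial `[n]_β! = ∏_{i=1}^n [i]_β`. -/
noncomputable def betaFact (β : ℕ → ℝ) (n : ℕ) : ℝ := ∏ i ∈ Finset.range n, β (i + 1)

/-- Composition (substitution) `u₂ ∘ u₁` of formal power series, for `u₁` with zero constant
term, defined coefficientwise: the `n`-th coefficient is `Σ_{k=0}^n (u₂)_k · (coeff n of u₁^k)`
(the sum may be truncated at `k = n` since `u₁` has zero constant term). -/
noncomputable def psComp (u₂ u₁ : PowerSeries ℂ) : PowerSeries ℂ :=
  PowerSeries.mk fun n =>
    ∑ k ∈ Finset.range (n + 1), PowerSeries.coeff k u₂ * PowerSeries.coeff n (u₁ ^ k)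

open Finset Polynomial

namespace PowerSeries

variable {R : Type*} [CommRing R]

theorem coeff_pow_eq_zero_of_lt {u : R⟦X⟧} (hu : constantCoeff u = 0) {n k : ℕ} (h : n < k) :
    coeff n (u ^ k) = 0 :=
  coeff_of_lt_order n <| (Nat.cast_lt.mpr h).trans_le (le_order_pow_of_constantCoeff_eq_zero k hu)

theorem coeff_subst_eq_sum_range {u : R⟦X⟧} (hu : constantCoeff u = 0) (f : R⟦X⟧) (n : ℕ) :
    coeff n (f.subst u) = ∑ k ∈ range (n + 1), coeff k f * coeff n (u ^ k) := by
  rw [coeff_subst' (.of_constantCoeff_zero' hu)]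
  refine finsum_eq_finsetSum_of_support_subset _ <| Function.support_subset_iff'.mpr fun k hk => ?_
  rw [coe_range, Set.mem_Iio, not_lt] at hk
  rw [coeff_pow_eq_zero_of_lt hu (by omega), smul_zero]

end PowerSeries

theorem psComp_eq_subst {u : PowerSeries ℂ} (hu : PowerSeries.constantCoeff u = 0)
    (f : PowerSeries ℂ) : psComp f u = f.subst u := by
  ext n
  rw [psComp, PowerSeries.coeff_mk, PowerSeries.coeff_subst_eq_sum_range hu]

section Umbral

variable {K : Type*} [Field K]

/-- With `b = [·]_β!` this is `P_n^{(u)}`, read off from `exp_β(x u(z))`. -/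
noncomputable def umbralPoly (b : ℕ → K) (u : PowerSeries K) (n : ℕ) : K[X] :=
  b n • ∑ k ∈ range (n + 1), (b k)⁻¹ • (C (PowerSeries.coeff n (u ^ k)) * X ^ k)

theorem coeff_umbralPoly (b : ℕ → K) {u : PowerSeries K} (hu : PowerSeries.constantCoeff u = 0)
    (n j : ℕ) : (umbralPoly b u n).coeff j = b n * (b j)⁻¹ * PowerSeries.coeff n (u ^ j) := by
  simp only [umbralPoly, coeff_smul, finsetSum_coeff, coeff_C_mul_X_pow, smul_eq_mul,
    mul_ite, mul_zero, sum_ite_eq, mem_range]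
  split_ifs with h
  · ring
  · rw [PowerSeries.coeff_pow_eq_zero_of_lt hu (by omega), mul_zero]

theorem apply_umbralPoly_eq_umbralPoly_subst {b : ℕ → K} (hb : ∀ n, b n ≠ 0)
    {u₁ u₂ : PowerSeries K} (hu₁ : PowerSeries.constantCoeff u₁ = 0)
    (hu₂ : PowerSeries.constantCoeff u₂ = 0)
    {W : Module.End K K[X]} (hW : ∀ n, W (X ^ n) = umbralPoly b u₂ n) (n : ℕ) :
    W (umbralPoly b u₁ n) = umbralPoly b (u₂.subst u₁) n := by
  ext j
  rw [coeff_umbralPoly b (PowerSeries.constantCoeff_subst_eq_zero hu₁ _ hu₂),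
    ← PowerSeries.subst_pow (.of_constantCoeff_zero' hu₁),
    PowerSeries.coeff_subst_eq_sum_range hu₁, umbralPoly]
  simp only [← smul_eq_C_mul, map_smul, map_sum, hW, coeff_smul, finsetSum_coeff,
    coeff_umbralPoly b hu₂, smul_eq_mul, mul_sum]
  refine sum_congr rfl fun k _ => ?_
  field_simp [hb k]

end Umbral

theorem betaFact_pos {β : ℕ → ℝ} (hβ : ∀ n, 1 ≤ n → 0 < β n) (n : ℕ) : 0 < betaFact β n :=
  prod_pos fun i _ => hβ (i + 1) (by omega)

theorem stmt_19_general (β : ℕ → ℝ) (hβpos : ∀ n, 1 ≤ n → 0 < β n)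
    (u₁ u₂ : PowerSeries ℂ)
    (hu₁0 : PowerSeries.constantCoeff u₁ = 0)
    (hu₂0 : PowerSeries.constantCoeff u₂ = 0)
    (P₁ P₂ P₃ : ℕ → Polynomial ℂ)
    (hgen₁ : ∀ n : ℕ, ((betaFact β n : ℂ))⁻¹ • P₁ n =
      ∑ k ∈ Finset.range (n + 1),
        ((betaFact β k : ℂ))⁻¹ •
          (Polynomial.C (PowerSeries.coeff n (u₁ ^ k)) * Polynomial.X ^ k))
    (hgen₂ : ∀ n : ℕ, ((betaFact β n : ℂ))⁻¹ • P₂ n =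
      ∑ k ∈ Finset.range (n + 1),
        ((betaFact β k : ℂ))⁻¹ •
          (Polynomial.C (PowerSeries.coeff n (u₂ ^ k)) * Polynomial.X ^ k))
    (hgen₃ : ∀ n : ℕ, ((betaFact β n : ℂ))⁻¹ • P₃ n =
      ∑ k ∈ Finset.range (n + 1),
        ((betaFact β k : ℂ))⁻¹ •
          (Polynomial.C (PowerSeries.coeff n ((psComp u₂ u₁) ^ k)) * Polynomial.X ^ k))
    (W₁ W₂ W₃ : Module.End ℂ (Polynomial ℂ))
    (hW₁ : ∀ n : ℕ, W₁ (Polynomial.X ^ n) = P₁ n)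
    (hW₂ : ∀ n : ℕ, W₂ (Polynomial.X ^ n) = P₂ n)
    (hW₃ : ∀ n : ℕ, W₃ (Polynomial.X ^ n) = P₃ n) :
    W₂ * W₁ = W₃ := by
  set b : ℕ → ℂ := fun n => (betaFact β n : ℂ)
  have hb (n : ℕ) : b n ≠ 0 := Complex.ofReal_ne_zero.mpr (betaFact_pos hβpos n).ne'
  have hP₁ (n : ℕ) : P₁ n = umbralPoly b u₁ n := (inv_smul_eq_iff₀ (hb n)).mp (hgen₁ n)
  have hP₂ (n : ℕ) : P₂ n = umbralPoly b u₂ n := (inv_smul_eq_iff₀ (hb n)).mp (hgen₂ n)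
  have hP₃ (n : ℕ) : P₃ n = umbralPoly b (u₂.subst u₁) n := by
    rw [← psComp_eq_subst hu₁0]
    exact (inv_smul_eq_iff₀ (hb n)).mp (hgen₃ n)
  refine Polynomial.lhom_ext' fun n => LinearMap.ext_ring ?_
  simp only [LinearMap.comp_apply, ← X_pow_eq_monomial, Module.End.mul_apply, hW₁, hW₃, hP₁, hP₃]
  exact apply_umbralPoly_eq_umbralPoly_subst hb hu₁0 hu₂0 (fun k => (hW₂ k).trans (hP₂ k)) n

/-- the composition of umbral operators corresponds to composition of the
parametrizing power series: `W_{u₂} ∘ W_{u₁} = W_{u₂ ∘ u₁}`, where `W_u x^n = P_n^{(u)}`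
and `(P_n^{(u)})` is determined by `Σ (1/[n]_β!) P_n^{(u)}(x) zⁿ = exp_β(u(z)x)`. -/
theorem stmt_19 (β : ℕ → ℝ) (hβ0 : β 0 = 0) (hβ1 : β 1 = 1) (hβpos : ∀ n, 1 ≤ n → 0 < β n)
    (u₁ u₂ : PowerSeries ℂ)
    (hu₁0 : PowerSeries.constantCoeff u₁ = 0) (hu₁1 : PowerSeries.coeff 1 u₁ = 1)
    (hu₂0 : PowerSeries.constantCoeff u₂ = 0) (hu₂1 : PowerSeries.coeff 1 u₂ = 1)
    (P₁ P₂ P₃ : ℕ → Polynomial ℂ)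
    (hgen₁ : ∀ n : ℕ, ((betaFact β n : ℂ))⁻¹ • P₁ n =
      ∑ k ∈ Finset.range (n + 1),
        ((betaFact β k : ℂ))⁻¹ •
          (Polynomial.C (PowerSeries.coeff n (u₁ ^ k)) * Polynomial.X ^ k))
    (hgen₂ : ∀ n : ℕ, ((betaFact β n : ℂ))⁻¹ • P₂ n =
      ∑ k ∈ Finset.range (n + 1),
        ((betaFact β k : ℂ))⁻¹ •
          (Polynomial.C (PowerSeries.coeff n (u₂ ^ k)) * Polynomial.X ^ k))
    (hgen₃ : ∀ n : ℕ, ((betaFact β n : ℂ))⁻¹ • P₃ n =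
      ∑ k ∈ Finset.range (n + 1),
        ((betaFact β k : ℂ))⁻¹ •
          (Polynomial.C (PowerSeries.coeff n ((psComp u₂ u₁) ^ k)) * Polynomial.X ^ k))
    (W₁ W₂ W₃ : Module.End ℂ (Polynomial ℂ))
    (hW₁ : ∀ n : ℕ, W₁ (Polynomial.X ^ n) = P₁ n)
    (hW₂ : ∀ n : ℕ, W₂ (Polynomial.X ^ n) = P₂ n)
    (hW₃ : ∀ n : ℕ, W₃ (Polynomial.X ^ n) = P₃ n) :
    W₂ * W₁ = W₃ :=
  stmt_19_general β hβpos u₁ u₂ hu₁0 hu₂0 P₁ P₂ P₃ hgen₁ hgen₂ hgen₃ W₁ W₂ W₃ hW₁ hW₂ hW₃
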